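/- arXiv:math/0107110 — 2 statements merged into one kernel-verified Lean document; each statement's English description precedes it below -/
import Mathlib

section
/- Let k be a field of characteristic different from 2, let n ≥ 2, and let a₁, …, aₙ be units of k. If the n-fold Pfister form ⟨⟨a₁,…,aₙ⟩⟩ is isotropic over k, then the symbol {a₁,…,aₙ} is divisible by 2 in the Milnor K-group K_n^M(k). -/
open scoped TensorProduct

/-- The Steinberg submodule of the `n`-fold tensor power (over `ℤ`) of `kˣ`: the
subgroup generated by the elementary tensors `a₁ ⊗ ⋯ ⊗ aₙ` with `aᵢ + aᵢ₊₁ = 1` in `k`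
for some `i`. -/
def steinbergSubmodule (k : Type*) [Field k] (n : ℕ) :
    Submodule ℤ (⨂[ℤ]^n (Additive kˣ)) :=
  Submodule.span ℤ
    { x | ∃ (u : Fin n → kˣ) (i j : Fin n), (i : ℕ) + 1 = (j : ℕ) ∧
        ((u i : k) + (u j : k) = 1) ∧
        x = PiTensorProduct.tprod ℤ (fun t => Additive.ofMul (u t)) }

/-- The `n`-th Milnor K-group `K_n^M(k)`: the quotient of the `n`-fold tensor power over `ℤ`
of the multiplicative group `kˣ` by the Steinberg relations. -/
def MilnorKGroup (k : Type*) [Field k] (n : ℕ) :=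
  (⨂[ℤ]^n (Additive kˣ)) ⧸ steinbergSubmodule k n

noncomputable instance (k : Type*) [Field k] (n : ℕ) : AddCommGroup (MilnorKGroup k n) :=
  Submodule.Quotient.addCommGroup _

/-- The Milnor symbol `{a₁,…,aₙ} ∈ K_n^M(k)`. -/
noncomputable def milnorSymbol {k : Type*} [Field k] {n : ℕ} (u : Fin n → kˣ) : MilnorKGroup k n :=
  Submodule.Quotient.mk (PiTensorProduct.tprod ℤ (fun t => Additive.ofMul (u t)))

/-- The coefficient of the Pfister form `⟨⟨a₁,…,aₙ⟩⟩` at the variable indexed by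
`S : Fin n → Bool`. -/
def pfisterCoeff {k : Type*} [Field k] (n : ℕ) (a : Fin n → k) (S : Fin n → Bool) : k :=
  ∏ i ∈ Finset.univ.filter (fun i => S i = true), (-(a i))

/-- The `n`-fold Pfister form `⟨⟨a₁,…,aₙ⟩⟩`, a diagonal quadratic form in `2ⁿ` variables
indexed by `Fin n → Bool`. -/
def pfisterForm {k : Type*} [Field k] (n : ℕ) (a : Fin n → k)
    (x : (Fin n → Bool) → k) : k :=
  ∑ S : Fin n → Bool, pfisterCoeff n a S * x S ^ 2

/-!
Induction on `n`, splitting `⟨⟨a₁,…,aₙ⟩⟩ = q ⊥ -aₙ q` with `q = ⟨⟨a₁,…,aₙ₋₁⟩⟩`. Alongside the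
theorem one proves that `{a₁,…,aₙ,d}` is divisible by 2 whenever `d ≠ 0` is a value of
`⟨⟨a₁,…,aₙ⟩⟩`. Write `d = x - aₙ y` with `x, y` values of `q`; when both are nonzero, the
Steinberg relation `{b, 1 - b} = 0` for `b = aₙ y / x` and anticommutativity of symbols express
`{…, aₙ, d}` through symbols `{…, x, ·}` and `{…, y, ·}`, which are divisible by 2 by induction.
An isotropic vector gives `x = aₙ y`, so `{…, aₙ} = {…, x} - {…, y}`; if `y = 0`, one of the two
halves of the vector is already isotropic for `q`.
-/

section Pfister

open Fin

variable {k : Type*} [Field k] {n : ℕ}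

lemma pfisterCoeff_eq_prod (a : Fin n → k) (S : Fin n → Bool) :
    pfisterCoeff n a S = ∏ i, if S i then -a i else 1 :=
  Finset.prod_filter _ _

lemma pfisterCoeff_snoc_false (a : Fin (n + 1) → k) (S : Fin n → Bool) :
    pfisterCoeff (n + 1) a (snoc S false) = pfisterCoeff n (init a) S := by
  simp [pfisterCoeff_eq_prod, prod_univ_castSucc, init]

lemma pfisterCoeff_snoc_true (a : Fin (n + 1) → k) (S : Fin n → Bool) :
    pfisterCoeff (n + 1) a (snoc S true) = -a (last n) * pfisterCoeff n (init a) S := by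
  simp [pfisterCoeff_eq_prod, prod_univ_castSucc, init, mul_comm]

lemma pfisterForm_zero (a : Fin 0 → k) (w : (Fin 0 → Bool) → k) :
    pfisterForm 0 a w = w elim0 ^ 2 := by
  rw [pfisterForm, Fintype.sum_subsingleton _ elim0, pfisterCoeff_eq_prod, prod_univ_zero, one_mul]

lemma pfisterForm_succ (a : Fin (n + 1) → k) (w : (Fin (n + 1) → Bool) → k) :
    pfisterForm (n + 1) a w =
      pfisterForm n (init a) (fun S => w (snoc S false))
        - a (last n) * pfisterForm n (init a) (fun S => w (snoc S true)) := by
  rw [pfisterForm, ← (snocEquiv fun _ => Bool).sum_comp, Fintype.sum_prod_type, Fintype.sum_bool]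
  simp only [snocEquiv, Equiv.coe_fn_mk, pfisterCoeff_snoc_false, pfisterCoeff_snoc_true,
    pfisterForm, Finset.mul_sum, ← Finset.sum_sub_distrib, ← Finset.sum_add_distrib]
  exact Finset.sum_congr rfl fun S _ => by ring

lemma exists_comp_snoc_ne_zero {β M : Type*} [Zero M] {w : (Fin (n + 1) → β) → M} (hw : w ≠ 0) :
    ∃ b, (fun S => w (snoc S b)) ≠ 0 := by
  obtain ⟨T, hT⟩ := Function.ne_iff.mp hw
  exact ⟨T (last n), fun h => hT (by rw [← snoc_init_self T]; exact congrFun h (init T))⟩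

end Pfister

namespace MilnorKGroup

open Fin Additive

variable {k : Type*} [Field k] {n : ℕ}

variable (k n) in
noncomputable def symbolMap :
    MultilinearMap ℤ (fun _ : Fin n => Additive kˣ) (MilnorKGroup k n) :=
  (steinbergSubmodule k n).mkQ.compMultilinearMap (PiTensorProduct.tprod ℤ)

lemma milnorSymbol_eq_symbolMap (u : Fin n → kˣ) :
    milnorSymbol u = symbolMap k n (fun i => ofMul (u i)) :=
  rfl

noncomputable def snocSymbol (v : Fin n → kˣ) :
    Additive kˣ →ₗ[ℤ] MilnorKGroup k (n + 1) :=
  (symbolMap k (n + 1)).curryRight (fun i => ofMul (v i))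

lemma snocSymbol_ofMul (v : Fin n → kˣ) (x : kˣ) :
    snocSymbol v (ofMul x) = milnorSymbol (snoc v x) := by
  rw [snocSymbol, MultilinearMap.curryRight_apply, milnorSymbol_eq_symbolMap]
  exact congrArg (symbolMap k (n + 1)) (comp_snoc ofMul v x).symm

noncomputable def snocSnocSymbol (v : Fin n → kˣ) :
    Additive kˣ →ₗ[ℤ] Additive kˣ →ₗ[ℤ] MilnorKGroup k (n + 2) :=
  (symbolMap k (n + 2)).curryRight.curryRight (fun i => ofMul (v i))

lemma snocSnocSymbol_ofMul (v : Fin n → kˣ) (x y : kˣ) :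
    snocSnocSymbol v (ofMul x) (ofMul y) = milnorSymbol (snoc (snoc v x) y) := by
  rw [snocSnocSymbol, MultilinearMap.curryRight_apply, MultilinearMap.curryRight_apply,
    milnorSymbol_eq_symbolMap]
  exact congrArg (symbolMap k (n + 2))
    ((comp_snoc ofMul (snoc v x) y).trans (congrArg (snoc · _) (comp_snoc ofMul v x))).symm

variable (v : Fin n → kˣ)

lemma milnorSymbol_snoc_mul (x y : kˣ) :
    milnorSymbol (snoc v (x * y)) = milnorSymbol (snoc v x) + milnorSymbol (snoc v y) := by
  simp only [← snocSymbol_ofMul, ofMul_mul, map_add]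

lemma milnorSymbol_snoc_div (x y : kˣ) :
    milnorSymbol (snoc v (x / y)) = milnorSymbol (snoc v x) - milnorSymbol (snoc v y) := by
  simp only [← snocSymbol_ofMul, ofMul_div, map_sub]

lemma milnorSymbol_snoc_snoc_mul_left (x y z : kˣ) :
    milnorSymbol (snoc (snoc v (x * y)) z) =
      milnorSymbol (snoc (snoc v x) z) + milnorSymbol (snoc (snoc v y) z) := by
  simp only [← snocSnocSymbol_ofMul, ofMul_mul, map_add, LinearMap.add_apply]

lemma milnorSymbol_snoc_snoc_div_left (x y z : kˣ) :
    milnorSymbol (snoc (snoc v (x / y)) z) =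
      milnorSymbol (snoc (snoc v x) z) - milnorSymbol (snoc (snoc v y) z) := by
  simp only [← snocSnocSymbol_ofMul, ofMul_div, map_sub, LinearMap.sub_apply]

lemma milnorSymbol_snoc_snoc_one_left (z : kˣ) :
    milnorSymbol (snoc (snoc v 1) z) = 0 := by
  simp only [← snocSnocSymbol_ofMul, ofMul_one, map_zero, LinearMap.zero_apply]

lemma milnorSymbol_eq_zero_of_add_eq_one (u : Fin n → kˣ) (i j : Fin n)
    (hij : (i : ℕ) + 1 = j) (h : (u i : k) + u j = 1) : milnorSymbol u = 0 :=
  (Submodule.Quotient.mk_eq_zero _).mpr (Submodule.subset_span ⟨u, i, j, hij, h, rfl⟩)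

lemma milnorSymbol_snoc_snoc_eq_zero_of_add_eq_one {x y : kˣ} (h : (x : k) + y = 1) :
    milnorSymbol (snoc (snoc v x) y) = 0 :=
  milnorSymbol_eq_zero_of_add_eq_one _ (castSucc (last n)) (last (n + 1)) rfl
    (by simpa only [snoc_castSucc, snoc_last] using h)

-- `-x = (1 - x) / (1 - x⁻¹)`, and both `{x, 1 - x}` and `{x⁻¹, 1 - x⁻¹}` vanish.
lemma milnorSymbol_snoc_snoc_neg_self (x : kˣ) :
    milnorSymbol (snoc (snoc v x) (-x)) = 0 := by
  obtain rfl | hx := eq_or_ne x 1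
  · exact milnorSymbol_snoc_snoc_one_left v _
  have hx' : (x : k) ≠ 1 := Units.val_eq_one.not.mpr hx
  have hx'' : (x⁻¹ : kˣ) ≠ (1 : k) := Units.val_eq_one.not.mpr (inv_ne_one.mpr hx)
  set p := Units.mk0 (1 - (x : k)) (sub_ne_zero.mpr hx'.symm)
  set q := Units.mk0 (1 - ((x⁻¹ : kˣ) : k)) (sub_ne_zero.mpr hx''.symm)
  have hneg : -x = p / q := by
    ext
    simp only [p, q, Units.val_neg, Units.val_div_eq_div_val, Units.val_mk0,
      Units.val_inv_eq_inv_val]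
    field_simp
    ring
  have hp : milnorSymbol (snoc (snoc v x) p) = 0 :=
    milnorSymbol_snoc_snoc_eq_zero_of_add_eq_one v (by simp [p])
  have hq : milnorSymbol (snoc (snoc v x) q) = 0 := by
    rw [← inv_inv x, ← one_div, milnorSymbol_snoc_snoc_div_left, milnorSymbol_snoc_snoc_one_left,
      milnorSymbol_snoc_snoc_eq_zero_of_add_eq_one v (by simp [q]), sub_zero]
  rw [hneg, milnorSymbol_snoc_div, hp, hq, sub_zero]

lemma milnorSymbol_snoc_snoc_swap (x y : kˣ) :
    milnorSymbol (snoc (snoc v x) y) = -milnorSymbol (snoc (snoc v y) x) := by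
  have hx : milnorSymbol (snoc (snoc v x) (-(x * y))) = milnorSymbol (snoc (snoc v x) y) := by
    rw [← neg_mul, milnorSymbol_snoc_mul, milnorSymbol_snoc_snoc_neg_self, zero_add]
  have hy : milnorSymbol (snoc (snoc v y) (-(x * y))) = milnorSymbol (snoc (snoc v y) x) := by
    rw [mul_comm, ← neg_mul, milnorSymbol_snoc_mul, milnorSymbol_snoc_snoc_neg_self, zero_add]
  have h := milnorSymbol_snoc_snoc_neg_self v (x * y)
  rw [milnorSymbol_snoc_snoc_mul_left, hx, hy] at h
  exact eq_neg_of_add_eq_zero_left h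

variable (n) in
noncomputable def tensorSnoc (c : Additive kˣ) :
    (⨂[ℤ]^n (Additive kˣ)) →ₗ[ℤ] ⨂[ℤ]^(n + 1) (Additive kˣ) :=
  PiTensorProduct.lift
    ((LinearMap.applyₗ c).compMultilinearMap
      (PiTensorProduct.tprod ℤ (s := fun _ : Fin (n + 1) => Additive kˣ)).curryRight)

lemma tensorSnoc_tprod (c : Additive kˣ) (f : Fin n → Additive kˣ) :
    tensorSnoc n c (PiTensorProduct.tprod ℤ f) = PiTensorProduct.tprod ℤ (snoc f c) := by
  rw [tensorSnoc, PiTensorProduct.lift.tprod, LinearMap.compMultilinearMap_apply]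
  rfl

lemma steinbergSubmodule_le_comap_tensorSnoc (b : kˣ) :
    steinbergSubmodule k n ≤ (steinbergSubmodule k (n + 1)).comap (tensorSnoc n (ofMul b)) := by
  rw [steinbergSubmodule, Submodule.span_le]
  rintro _ ⟨u, i, j, hij, h, rfl⟩
  refine Submodule.subset_span ⟨snoc u b, castSucc i, castSucc j, hij, ?_, ?_⟩
  · simpa only [snoc_castSucc] using h
  · rw [tensorSnoc_tprod]
    exact congrArg _ (comp_snoc ofMul u b).symm

variable (n) in
noncomputable def mulSymbol (b : kˣ) : MilnorKGroup k n →+ MilnorKGroup k (n + 1) :=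
  (Submodule.mapQ _ _ (tensorSnoc n (ofMul b))
    (steinbergSubmodule_le_comap_tensorSnoc b)).toAddMonoidHom

lemma mulSymbol_milnorSymbol (b : kˣ) :
    mulSymbol n b (milnorSymbol v) = milnorSymbol (snoc v b) :=
  congrArg Submodule.Quotient.mk
    ((tensorSnoc_tprod _ _).trans (congrArg _ (comp_snoc ofMul v b).symm))

lemma even_milnorSymbol_snoc_mul_self (v : Fin n → kˣ) (t : kˣ) :
    Even (milnorSymbol (snoc v (t * t))) :=
  milnorSymbol_snoc_mul v t t ▸ Even.add_self _

variable {v}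

lemma even_milnorSymbol_snoc (h : Even (milnorSymbol v)) (b : kˣ) :
    Even (milnorSymbol (snoc v b)) :=
  mulSymbol_milnorSymbol v b ▸ h.map (mulSymbol n b)

lemma even_milnorSymbol_snoc_snoc {x : kˣ} (h : Even (milnorSymbol (snoc v x))) (a : kˣ) :
    Even (milnorSymbol (snoc (snoc v a) x)) := by
  rw [milnorSymbol_snoc_snoc_swap]
  exact (even_milnorSymbol_snoc h a).neg

lemma even_milnorSymbol_snoc_snoc_neg_mul {y : kˣ} (h : Even (milnorSymbol (snoc v y))) (a : kˣ) :
    Even (milnorSymbol (snoc (snoc v a) (-a * y))) := by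
  rw [milnorSymbol_snoc_mul, milnorSymbol_snoc_snoc_neg_self, zero_add]
  exact even_milnorSymbol_snoc_snoc h a

-- With `b = a y / x` one has `d = x (1 - b)` and `a = b x / y`, and `{b, 1 - b} = 0`.
lemma even_milnorSymbol_snoc_snoc_of_eq_sub_mul {x y a d : kˣ}
    (hx : Even (milnorSymbol (snoc v x))) (hy : Even (milnorSymbol (snoc v y)))
    (hd : (d : k) = x - a * y) : Even (milnorSymbol (snoc (snoc v a) d)) := by
  set b := a * y / x
  have hc : (1 : k) - b ≠ 0 := by
    intro h
    have hay : a * y = x := div_eq_one.mp (Units.val_eq_one.mp (sub_eq_zero.mp h).symm)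
    exact d.ne_zero (by rw [hd, ← Units.val_mul, hay, sub_self])
  set c := Units.mk0 _ hc
  have hdc : d = x * c := by
    ext
    simp only [hd, c, b, Units.val_mul, Units.val_mk0, Units.val_div_eq_div_val]
    field_simp
  have ha : a = b * x / y := by simp [b]
  rw [hdc, milnorSymbol_snoc_mul]
  refine (even_milnorSymbol_snoc_snoc hx a).add ?_
  rw [ha, milnorSymbol_snoc_snoc_div_left, milnorSymbol_snoc_snoc_mul_left,
    milnorSymbol_snoc_snoc_eq_zero_of_add_eq_one v (by simp [c]), zero_add]
  exact (even_milnorSymbol_snoc hx c).sub (even_milnorSymbol_snoc hy c)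

theorem even_milnorSymbol_snoc_of_pfisterForm_eq (a : Fin n → kˣ) (d : kˣ)
    (u : (Fin n → Bool) → k) (hu : pfisterForm n (fun i => (a i : k)) u = d) :
    Even (milnorSymbol (snoc a d)) := by
  induction n generalizing d with
  | zero =>
    rw [pfisterForm_zero] at hu
    have ht : u elim0 ≠ 0 := fun h => d.ne_zero (by rw [← hu, h, sq, zero_mul])
    convert even_milnorSymbol_snoc_mul_self a (Units.mk0 _ ht)
    ext
    rw [Units.val_mul, Units.val_mk0, ← sq, hu]
  | succ n ih =>
    rw [pfisterForm_succ] at hu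
    rw [← snoc_init_self a]
    set X := pfisterForm n (init fun i => (a i : k)) fun S => u (snoc S false)
    set Y := pfisterForm n (init fun i => (a i : k)) fun S => u (snoc S true)
    obtain hY | hY := eq_or_ne Y 0
    · exact even_milnorSymbol_snoc_snoc
        (ih (init a) d _ (hu ▸ (sub_eq_self.mpr (by rw [hY, mul_zero])).symm)) _
    obtain hX | hX := eq_or_ne X 0
    · have hd : d = -a (last n) * Units.mk0 Y hY := by
        ext
        simp [← hu, hX]
      rw [hd]
      exact even_milnorSymbol_snoc_snoc_neg_mul (ih (init a) _ _ rfl) _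
    · exact even_milnorSymbol_snoc_snoc_of_eq_sub_mul (ih (init a) (Units.mk0 X hX) _ rfl)
        (ih (init a) (Units.mk0 Y hY) _ rfl) hu.symm

theorem even_milnorSymbol_of_pfisterForm_eq_zero (a : Fin n → kˣ) (w : (Fin n → Bool) → k)
    (hw : w ≠ 0) (h : pfisterForm n (fun i => (a i : k)) w = 0) : Even (milnorSymbol a) := by
  induction n with
  | zero =>
    rw [pfisterForm_zero, sq_eq_zero_iff] at h
    exact absurd (funext fun S => Subsingleton.elim S elim0 ▸ h) hw
  | succ n ih =>
    rw [pfisterForm_succ, sub_eq_zero] at h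
    rw [← snoc_init_self a]
    set X := pfisterForm n (init fun i => (a i : k)) fun S => w (snoc S false)
    set Y := pfisterForm n (init fun i => (a i : k)) fun S => w (snoc S true)
    obtain hY | hY := eq_or_ne Y 0
    · obtain ⟨b, hb⟩ := exists_comp_snoc_ne_zero hw
      cases b
      · exact even_milnorSymbol_snoc (ih (init a) _ hb (h.trans (by rw [hY, mul_zero]))) _
      · exact even_milnorSymbol_snoc (ih (init a) _ hb hY) _
    have hX : X ≠ 0 := by
      rw [h]
      exact mul_ne_zero (a (last n)).ne_zero hY
    have ha : a (last n) = Units.mk0 X hX / Units.mk0 Y hY := by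
      ext
      simp [h]
    rw [ha, milnorSymbol_snoc_div]
    exact (even_milnorSymbol_snoc_of_pfisterForm_eq _ _ _ rfl).sub
      (even_milnorSymbol_snoc_of_pfisterForm_eq _ _ _ rfl)

end MilnorKGroup

theorem milnorSymbol_div_two_of_pfister_isotropic_general
    {k : Type*} [Field k]
    (m : ℕ) (a : Fin (m + 2) → kˣ)
    (hiso : ∃ w : (Fin (m + 2) → Bool) → k, w ≠ 0 ∧
        pfisterForm (m + 2) (fun i => (a i : k)) w = 0) :
    ∃ y : MilnorKGroup k (m + 2), milnorSymbol a = 2 • y := by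
  obtain ⟨w, hw, h⟩ := hiso
  exact (MilnorKGroup.even_milnorSymbol_of_pfisterForm_eq_zero a w hw h).exists_two_nsmul _

/-- Proposition `isspl0` (Pfister quadric version) of Voevodsky's
"On 2-torsion in motivic cohomology": if `char k ≠ 2`, `n ≥ 2` (here `n = m+2`) and the
`n`-fold Pfister form `⟨⟨a₁,…,aₙ⟩⟩` is isotropic over `k`, then the symbol `{a₁,…,aₙ}` is
divisible by `2` in `K_n^M(k)`. -/
theorem milnorSymbol_div_two_of_pfister_isotropic
    {k : Type*} [Field k] (hchar : ringChar k ≠ 2)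
    (m : ℕ) (a : Fin (m + 2) → kˣ)
    (hiso : ∃ w : (Fin (m + 2) → Bool) → k, w ≠ 0 ∧
        pfisterForm (m + 2) (fun i => (a i : k)) w = 0) :
    ∃ y : MilnorKGroup k (m + 2), milnorSymbol a = 2 • y :=
  milnorSymbol_div_two_of_pfister_isotropic_general m a hiso
end

section
/- Let k be a field of characteristic different from 2, let n ≥ 2, and let a₁, …, aₙ be units of k. Let f be the polynomial ⟨⟨a₁,…,a_{n−1}⟩⟩(X₀,…,X_{2^{n−1}−1}) − aₙ·X²_{2^{n−1}} in the polynomial ring k[X₀,…,X_{2^{n−1}}]. Then f generates a prime ideal (so A := k[X₀,…,X_{2^{n−1}}]/(f) is an integral domain), and in the Milnor K-group K_n^M(L) of the fraction field L = Frac(A) the symbol {a₁,…,aₙ} is divisible by 2. (L is a purely transcendental extension of the function field k(Q_{a₁,…,aₙ}) of the norm quadric; this realizes the statement that the symbol {a₁,…,aₙ} becomes divisible by 2 over the function field of the norm quadric.) -/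
open scoped TensorProduct

/-!
Over `L`, the point `x_S = X_S / Y` (with `Y = X (Sum.inr ())`, nonzero in `L`) shows that `aₙ`
is a value of the Pfister form `⟨⟨a₁,…,aₙ₋₁⟩⟩`, so it suffices that `{c₁,…,c_r,b}` is divisible
by `2` whenever `b` is a value of `⟨⟨c₁,…,c_r⟩⟩`. For `r = 0`, `b` is a square. Otherwise
`⟨⟨c₁,…,c_r⟩⟩ = ⟨⟨c₁,…,c_{r-1}⟩⟩ ⊥ -c_r⟨⟨c₁,…,c_{r-1}⟩⟩` gives `b = C - c_r D` with `C`, `D`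
values of the smaller form; writing `b = C (1 - c_r D / C)`, the Steinberg relation
`{c_r D / C, 1 - c_r D / C} = 0` and antisymmetry reduce `{c, b}` to symbols ending in
`{…, C, ·}` and `{…, D, ·}`, which are divisible by `2` by induction.

Primality: after dividing by `-aₙ` the polynomial becomes `Y² - g` over `k[X_S]`, where `g` is a
diagonal quadratic form in at least two variables. It is not a square (specialize to
`γ₀ X² + γ₁`), so `Y² - g` is irreducible over the integrally closed ring `k[X_S]`, hence prime
in the UFD `k[X_S][Y]`.
-/

section MilnorK

variable {K : Type*} [Field K] {n : ℕ}

lemma ofMul_comp_snoc (u : Fin n → Kˣ) (w : Kˣ) :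
    (fun t => Additive.ofMul ((Fin.snoc u w : Fin (n + 1) → Kˣ) t)) =
      Fin.snoc (fun t => Additive.ofMul (u t)) (Additive.ofMul w) := by
  funext t
  refine Fin.lastCases ?_ (fun i => ?_) t <;> simp

lemma milnorSymbol_snoc_mul (c : Fin n → Kˣ) (x y : Kˣ) :
    milnorSymbol (Fin.snoc c (x * y)) =
      milnorSymbol (Fin.snoc c x) + milnorSymbol (Fin.snoc c y) := by
  simp only [milnorSymbol, ofMul_comp_snoc, ← MultilinearMap.curryRight_apply, ofMul_mul,
    map_add, Submodule.Quotient.mk_add]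
  rfl

lemma milnorSymbol_snoc_inv (c : Fin n → Kˣ) (x : Kˣ) :
    milnorSymbol (Fin.snoc c x⁻¹) = -milnorSymbol (Fin.snoc c x) := by
  simp only [milnorSymbol, ofMul_comp_snoc, ← MultilinearMap.curryRight_apply, ofMul_inv,
    map_neg, Submodule.Quotient.mk_neg]
  rfl

lemma milnorSymbol_snoc_one (c : Fin n → Kˣ) : milnorSymbol (Fin.snoc c (1 : Kˣ)) = 0 := by
  simp only [milnorSymbol, ofMul_comp_snoc, ← MultilinearMap.curryRight_apply, ofMul_one,
    map_zero, Submodule.Quotient.mk_zero]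
  rfl

lemma milnorSymbol_snoc_snoc_of_add_eq_one (c : Fin n → Kˣ) {x y : Kˣ}
    (h : (x : K) + y = 1) : milnorSymbol (Fin.snoc (Fin.snoc c x) y) = 0 :=
  (Submodule.Quotient.mk_eq_zero _).2 <| Submodule.subset_span
    ⟨_, (Fin.last n).castSucc, Fin.last (n + 1), rfl, by simpa using h, rfl⟩

noncomputable def milnorSnocHom (w : Kˣ) : MilnorKGroup K n →+ MilnorKGroup K (n + 1) :=
  (Submodule.mapQ (steinbergSubmodule K n) (steinbergSubmodule K (n + 1))
    (PiTensorProduct.lift ((LinearMap.applyₗ (Additive.ofMul w)).compMultilinearMap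
      (PiTensorProduct.tprod ℤ (s := fun _ : Fin (n + 1) => Additive Kˣ)).curryRight)) (by
        rw [steinbergSubmodule, Submodule.span_le]
        rintro _ ⟨u, i, j, hij, h, rfl⟩
        simp only [SetLike.mem_coe, Submodule.mem_comap, PiTensorProduct.lift.tprod,
          LinearMap.compMultilinearMap_apply, MultilinearMap.curryRight_apply,
          LinearMap.applyₗ_apply_apply, ← ofMul_comp_snoc]
        exact Submodule.subset_span ⟨Fin.snoc u w, i.castSucc, j.castSucc, hij,
          by simpa using h, rfl⟩)).toAddMonoidHom

lemma milnorSnocHom_milnorSymbol (w : Kˣ) (u : Fin n → Kˣ) :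
    milnorSnocHom w (milnorSymbol u) = milnorSymbol (Fin.snoc u w) := by
  show Submodule.Quotient.mk (PiTensorProduct.lift _ _) = Submodule.Quotient.mk _
  rw [PiTensorProduct.lift.tprod, ofMul_comp_snoc]
  rfl

lemma milnorSymbol_snoc_snoc_neg (c : Fin n → Kˣ) (x : Kˣ) :
    milnorSymbol (Fin.snoc (Fin.snoc c x) (-x)) = 0 := by
  obtain rfl | hx := eq_or_ne x 1
  · rw [← milnorSnocHom_milnorSymbol, milnorSymbol_snoc_one, map_zero]
  obtain ⟨w₁, hw₁⟩ : ∃ w : Kˣ, (w : K) = 1 - x :=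
    ⟨Units.mk0 _ (sub_ne_zero.2 (Ne.symm (Units.val_eq_one.not.2 hx))), rfl⟩
  obtain ⟨w₂, hw₂⟩ : ∃ w : Kˣ, (w : K) = 1 - (x⁻¹ : Kˣ) :=
    ⟨Units.mk0 _ (sub_ne_zero.2 (Ne.symm (Units.val_eq_one.not.2 (inv_ne_one.2 hx)))), rfl⟩
  have hxw₂ : milnorSymbol (Fin.snoc (Fin.snoc c x) w₂) = 0 := by
    rw [← inv_inv x, ← milnorSnocHom_milnorSymbol, milnorSymbol_snoc_inv, map_neg,
      milnorSnocHom_milnorSymbol, milnorSymbol_snoc_snoc_of_add_eq_one c (by simp [hw₂]),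
      neg_zero]
  have hneg : -x = w₁ * w₂⁻¹ := by
    rw [eq_mul_inv_iff_mul_eq]
    ext
    rw [Units.val_mul, Units.val_neg, hw₁, hw₂, mul_sub, mul_one, Units.val_inv_eq_inv_val,
      neg_mul, mul_inv_cancel₀ x.ne_zero]
    ring
  rw [hneg, milnorSymbol_snoc_mul, milnorSymbol_snoc_inv, hxw₂,
    milnorSymbol_snoc_snoc_of_add_eq_one c (by simp [hw₁]), neg_zero, add_zero]

lemma milnorSymbol_snoc_snoc_swap (c : Fin n → Kˣ) (x y : Kˣ) :
    milnorSymbol (Fin.snoc (Fin.snoc c x) y) = -milnorSymbol (Fin.snoc (Fin.snoc c y) x) := by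
  have hx : milnorSymbol (Fin.snoc (Fin.snoc c x) (-(x * y))) =
      milnorSymbol (Fin.snoc (Fin.snoc c x) y) := by
    rw [← neg_mul, milnorSymbol_snoc_mul, milnorSymbol_snoc_snoc_neg, zero_add]
  have hy : milnorSymbol (Fin.snoc (Fin.snoc c y) (-(x * y))) =
      milnorSymbol (Fin.snoc (Fin.snoc c y) x) := by
    rw [mul_comm, ← neg_mul, milnorSymbol_snoc_mul, milnorSymbol_snoc_snoc_neg, zero_add]
  have h := milnorSymbol_snoc_snoc_neg c (x * y)
  rw [← milnorSnocHom_milnorSymbol, milnorSymbol_snoc_mul, map_add,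
    milnorSnocHom_milnorSymbol, milnorSnocHom_milnorSymbol, hx, hy] at h
  exact eq_neg_of_add_eq_zero_left h

end MilnorK

section Pfister

variable {K : Type*} [Field K]

lemma pfisterCoeff_ne_zero {n : ℕ} {a : Fin n → K} (ha : ∀ i, a i ≠ 0) (S : Fin n → Bool) :
    pfisterCoeff n a S ≠ 0 :=
  Finset.prod_ne_zero_iff.2 fun i _ => neg_ne_zero.2 (ha i)

lemma map_pfisterCoeff {L : Type*} [Field L] (φ : K →+* L) {n : ℕ} (a : Fin n → K)
    (S : Fin n → Bool) : pfisterCoeff n (fun i => φ (a i)) S = φ (pfisterCoeff n a S) := by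
  simp only [pfisterCoeff, map_prod, map_neg]

lemma pfisterCoeff_snoc {r : ℕ} (a : Fin (r + 1) → K) (T : Fin r → Bool) (v : Bool) :
    pfisterCoeff (r + 1) a (Fin.snoc T v) =
      (if v then -a (Fin.last r) else 1) * pfisterCoeff r (fun i => a i.castSucc) T := by
  simp only [pfisterCoeff, Finset.prod_filter, Fin.prod_univ_castSucc, Fin.snoc_castSucc,
    Fin.snoc_last]
  rw [mul_comm]

lemma pfisterForm_zero_s5 (a : Fin 0 → K) (x : (Fin 0 → Bool) → K) :
    pfisterForm 0 a x = x (fun _ => false) ^ 2 := by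
  rw [pfisterForm, Fintype.sum_unique, pfisterCoeff, Finset.univ_eq_empty, Finset.filter_empty,
    Finset.prod_empty, one_mul]
  exact congrArg (x · ^ 2) (Subsingleton.elim _ _)

lemma pfisterForm_succ_s5 {r : ℕ} (a : Fin (r + 1) → K) (x : (Fin (r + 1) → Bool) → K) :
    pfisterForm (r + 1) a x =
      pfisterForm r (fun i => a i.castSucc) (fun T => x (Fin.snoc T false)) -
        a (Fin.last r) * pfisterForm r (fun i => a i.castSucc) (fun T => x (Fin.snoc T true)) := by
  rw [pfisterForm, ← (Fin.snocEquiv fun _ => Bool).sum_comp, Fintype.sum_prod_type,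
    Fintype.sum_bool]
  simp only [Fin.snocEquiv, Equiv.coe_fn_mk, pfisterCoeff_snoc, pfisterForm, Finset.mul_sum,
    ite_true, Bool.false_eq_true, ite_false]
  rw [sub_eq_add_neg, ← Finset.sum_neg_distrib, add_comm]
  congr 1 <;> refine Finset.sum_congr rfl fun T _ => by ring

end Pfister

section Divisibility

variable {K : Type*} [Field K] {n : ℕ}

lemma even_milnorSymbol_snoc_snoc_of_even (c : Fin n → Kˣ) (t : Kˣ) {u : Kˣ}
    (hu : Even (milnorSymbol (Fin.snoc c u))) :
    Even (milnorSymbol (Fin.snoc (Fin.snoc c t) u)) := by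
  rw [milnorSymbol_snoc_snoc_swap, ← milnorSnocHom_milnorSymbol]
  exact (hu.map _).neg

theorem even_milnorSymbol_snoc_snoc_of_eq_sub_mul (c : Fin n → Kˣ) (t b : Kˣ) {C D : K}
    (hb : (b : K) = C - t * D)
    (hC : ∀ u : Kˣ, (u : K) = C → Even (milnorSymbol (Fin.snoc c u)))
    (hD : ∀ u : Kˣ, (u : K) = D → Even (milnorSymbol (Fin.snoc c u))) :
    Even (milnorSymbol (Fin.snoc (Fin.snoc c t) b)) := by
  obtain rfl | hD0 := eq_or_ne D 0
  · exact even_milnorSymbol_snoc_snoc_of_even c t (hC b (by rw [hb, mul_zero, sub_zero]))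
  set d := Units.mk0 D hD0
  obtain rfl | hC0 := eq_or_ne C 0
  · have hbd : b = -t * d := Units.ext (by simp [hb, d])
    rw [hbd, milnorSymbol_snoc_mul, milnorSymbol_snoc_snoc_neg, zero_add]
    exact even_milnorSymbol_snoc_snoc_of_even c t (hD d rfl)
  set C' := Units.mk0 C hC0
  -- `b = C (1 - t D / C)`, and `t D / C + (1 - t D / C) = 1` is a Steinberg relation.
  set w := b * C'⁻¹
  have hsteinberg : ((t * d * C'⁻¹ : Kˣ) : K) + w = 1 := by
    simp only [w, d, C', Units.val_mul, Units.val_inv_eq_inv_val, Units.val_mk0, hb]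
    field_simp
    ring
  have ht : milnorSymbol (Fin.snoc c t) = milnorSymbol (Fin.snoc c (t * d * C'⁻¹)) -
      milnorSymbol (Fin.snoc c d) + milnorSymbol (Fin.snoc c C') := by
    rw [milnorSymbol_snoc_mul, milnorSymbol_snoc_mul, milnorSymbol_snoc_inv]
    abel
  have htw : Even (milnorSymbol (Fin.snoc (Fin.snoc c t) w)) := by
    rw [← milnorSnocHom_milnorSymbol, ht, map_add, map_sub, milnorSnocHom_milnorSymbol,
      milnorSymbol_snoc_snoc_of_add_eq_one c hsteinberg, zero_sub]
    exact ((hD d rfl).map _).neg.add ((hC C' rfl).map _)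
  rw [show b = C' * w by simp [w], milnorSymbol_snoc_mul]
  exact (even_milnorSymbol_snoc_snoc_of_even c t (hC C' rfl)).add htw

theorem even_milnorSymbol_snoc_of_eq_pfisterForm {r : ℕ} (c : Fin r → Kˣ) (b : Kˣ)
    (x : (Fin r → Bool) → K) (hb : (b : K) = pfisterForm r (fun i => (c i : K)) x) :
    Even (milnorSymbol (Fin.snoc c b)) := by
  induction r generalizing b with
  | zero =>
    rw [pfisterForm_zero_s5] at hb
    have hx : x (fun _ => false) ≠ 0 := fun h => b.ne_zero (by rw [hb, h, sq, zero_mul])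
    rw [show b = Units.mk0 _ hx * Units.mk0 _ hx from Units.ext (by simp [hb, sq]),
      milnorSymbol_snoc_mul]
    exact ⟨_, rfl⟩
  | succ r ih =>
    rw [pfisterForm_succ_s5] at hb
    rw [← Fin.snoc_init_self c]
    exact even_milnorSymbol_snoc_snoc_of_eq_sub_mul _ _ _ hb (fun u => ih _ u _)
      (fun u => ih _ u _)

end Divisibility

section NonSquare

variable {k : Type*} [Field k]

open Polynomial in
lemma not_isSquare_C_mul_X_sq_add_C (h2 : (2 : k) ≠ 0) {γ₀ γ₁ : k} (h₀ : γ₀ ≠ 0)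
    (h₁ : γ₁ ≠ 0) : ¬IsSquare (C γ₀ * X ^ 2 + C γ₁) := by
  rintro ⟨q, hq⟩
  have hdeg : q.natDegree = 1 := by
    have := congrArg natDegree hq
    rw [natDegree_add_C, natDegree_C_mul_X_pow 2 _ h₀, ← sq, natDegree_pow] at this
    omega
  rw [eq_X_add_C_of_natDegree_le_one hdeg.le] at hq
  have hu : q.coeff 1 ≠ 0 := by
    rw [← hdeg]
    exact leadingCoeff_ne_zero.2 (ne_zero_of_natDegree_gt (hdeg ▸ Nat.zero_lt_one))
  have e₁ := congrArg (eval 1) hq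
  have e₂ := congrArg (eval (-1)) hq
  have e₀ := congrArg (eval 0) hq
  simp only [eval_add, eval_mul, eval_pow, eval_C, eval_X] at e₁ e₂ e₀
  -- `q(1)² = q(-1)²` forces `4 u v = 0` for `q = u X + v`
  have hv : q.coeff 0 ≠ 0 := fun h => h₁ (by simpa [h] using e₀)
  have : 2 * 2 * (q.coeff 1 * q.coeff 0) = 0 := by linear_combination e₂ - e₁
  simp_all

open MvPolynomial in
lemma not_isSquare_sum_C_mul_X_sq {σ : Type*} [Fintype σ] (h2 : (2 : k) ≠ 0)
    {γ : σ → k} {s₀ s₁ : σ} (hs : s₀ ≠ s₁) (h₀ : γ s₀ ≠ 0) (h₁ : γ s₁ ≠ 0) :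
    ¬IsSquare (∑ s, C (γ s) * X s ^ 2 : MvPolynomial σ k) := by
  classical
  let χ : MvPolynomial σ k →ₐ[k] Polynomial k :=
    aeval fun s => if s = s₀ then Polynomial.X else if s = s₁ then 1 else 0
  have hχ : χ (∑ s, C (γ s) * X s ^ 2) =
      Polynomial.C (γ s₀) * Polynomial.X ^ 2 + Polynomial.C (γ s₁) := by
    rw [map_sum, ← Finset.add_sum_erase _ _ (Finset.mem_univ s₀),
      ← Finset.add_sum_erase _ _ (Finset.mem_erase.2 ⟨hs.symm, Finset.mem_univ s₁⟩),
      Finset.sum_eq_zero]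
    · simp [χ, hs.symm]
    · intro s hs'
      simp only [Finset.mem_erase] at hs'
      simp [χ, hs'.1, hs'.2.1]
  exact fun hsq => not_isSquare_C_mul_X_sq_add_C h2 h₀ h₁ (hχ ▸ hsq.map χ)

open Polynomial in
lemma irreducible_X_sq_sub_C_of_not_isSquare {R : Type*} [CommRing R] [IsDomain R]
    [IsIntegrallyClosed R] {g : R} (hg : ¬IsSquare g) : Irreducible (X ^ 2 - C g) := by
  have hmonic : (X ^ 2 - C g).Monic := monic_X_pow_sub_C g two_ne_zero
  rw [hmonic.irreducible_iff_irreducible_map_fraction_map (K := FractionRing R),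
    Polynomial.map_sub, Polynomial.map_pow, map_X, map_C]
  refine X_pow_sub_C_irreducible_of_prime Nat.prime_two fun b hb => hg ?_
  -- a square root of `g` in the fraction field is integral over `R`, hence lies in `R`
  obtain ⟨y, hy⟩ := IsIntegrallyClosed.isIntegral_iff.1
    (show IsIntegral R b from ⟨X ^ 2 - C g, hmonic, by simp [eval₂_sub, hb]⟩)
  exact ⟨y, IsFractionRing.injective R (FractionRing R) (by rw [map_mul, ← sq, hy, hb])⟩

end NonSquare

section Quadric

variable {k : Type*} [Field k] {σ : Type*}

open MvPolynomial

noncomputable def diagonalQuadric [Fintype σ] (γ : σ → k) (c : k) : MvPolynomial (σ ⊕ Unit) k :=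
  ∑ s, C (γ s) * X (Sum.inl s) ^ 2 - C c * X (Sum.inr ()) ^ 2

variable (k σ) in
noncomputable def sumUnitEquivPolynomial :
    MvPolynomial (σ ⊕ Unit) k ≃ₐ[k] Polynomial (MvPolynomial σ k) :=
  (renameEquiv k (Equiv.optionEquivSumPUnit σ).symm).trans (optionEquivLeft k σ)

@[simp]
lemma sumUnitEquivPolynomial_X_inl (s : σ) :
    sumUnitEquivPolynomial k σ (X (Sum.inl s)) = Polynomial.C (X s) := by
  simp [sumUnitEquivPolynomial, Equiv.optionEquivSumPUnit, optionEquivLeft_X_some]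

@[simp]
lemma sumUnitEquivPolynomial_X_inr :
    sumUnitEquivPolynomial k σ (X (Sum.inr ())) = Polynomial.X := by
  simp [sumUnitEquivPolynomial, Equiv.optionEquivSumPUnit, optionEquivLeft_X_none]

@[simp]
lemma sumUnitEquivPolynomial_C (r : k) :
    sumUnitEquivPolynomial k σ (C r) = Polynomial.C (C r) :=
  (sumUnitEquivPolynomial k σ).commutes r

lemma sumUnitEquivPolynomial_diagonalQuadric [Fintype σ] (γ : σ → k) {c : k} (hc : c ≠ 0) :
    sumUnitEquivPolynomial k σ (diagonalQuadric γ c) =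
      Polynomial.C (C (-c)) * (Polynomial.X ^ 2 - Polynomial.C (∑ s, C (γ s / c) * X s ^ 2)) := by
  have hterm (s : σ) : Polynomial.C (C (-c)) * Polynomial.C (C (γ s / c) * X s ^ 2) =
      -Polynomial.C (C (γ s) * X s ^ 2) := by
    rw [← map_mul, ← mul_assoc, ← map_mul, neg_mul, mul_div_cancel₀ _ hc, map_neg, neg_mul,
      map_neg]
  rw [mul_sub, map_sum, Finset.mul_sum, Finset.sum_congr rfl fun s _ => hterm s,
    Finset.sum_neg_distrib]
  simp only [diagonalQuadric, map_sub, map_sum, map_mul, map_pow, map_neg,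
    sumUnitEquivPolynomial_C, sumUnitEquivPolynomial_X_inl, sumUnitEquivPolynomial_X_inr]
  ring

lemma prime_diagonalQuadric [Fintype σ] (h2 : (2 : k) ≠ 0) {γ : σ → k} {c : k} (hc : c ≠ 0)
    {s₀ s₁ : σ} (hs : s₀ ≠ s₁) (h₀ : γ s₀ ≠ 0) (h₁ : γ s₁ ≠ 0) :
    Prime (diagonalQuadric γ c) := by
  have hu : IsUnit (Polynomial.C (C (-c)) : Polynomial (MvPolynomial σ k)) :=
    (isUnit_iff_ne_zero.2 (neg_ne_zero.2 hc)).map (Polynomial.C.comp C)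
  rw [← MulEquiv.prime_iff (sumUnitEquivPolynomial k σ),
    sumUnitEquivPolynomial_diagonalQuadric γ hc, (associated_unit_mul_left _ _ hu).prime_iff,
    ← UniqueFactorizationMonoid.irreducible_iff_prime]
  exact irreducible_X_sq_sub_C_of_not_isSquare <| not_isSquare_sum_C_mul_X_sq h2 hs
    (div_ne_zero h₀ hc) (div_ne_zero h₁ hc)

lemma diagonalQuadric_not_dvd_X_inr [Fintype σ] (γ : σ → k) {c : k} (hc : c ≠ 0) :
    ¬diagonalQuadric γ c ∣ X (Sum.inr ()) := by
  intro h
  have h' := map_dvd (sumUnitEquivPolynomial k σ) h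
  rw [sumUnitEquivPolynomial_diagonalQuadric γ hc, sumUnitEquivPolynomial_X_inr] at h'
  have hdeg := Polynomial.natDegree_le_of_dvd (dvd_of_mul_left_dvd h') Polynomial.X_ne_zero
  rw [Polynomial.natDegree_X_pow_sub_C, Polynomial.natDegree_X] at hdeg
  omega

lemma map_C_eq_sum_of_map_diagonalQuadric_eq_zero [Fintype σ] {L : Type*} [Field L]
    (θ : MvPolynomial (σ ⊕ Unit) k →+* L) {γ : σ → k} {c : k}
    (hf : θ (diagonalQuadric γ c) = 0) (hY : θ (X (Sum.inr ())) ≠ 0) :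
    θ (C c) = ∑ s, θ (C (γ s)) * (θ (X (Sum.inl s)) / θ (X (Sum.inr ()))) ^ 2 := by
  simp only [diagonalQuadric, map_sub, map_sum, map_mul, map_pow, sub_eq_zero] at hf
  simp only [div_pow, ← mul_div_assoc, ← Finset.sum_div, hf]
  field_simp

end Quadric

open MvPolynomial in
/-- Proposition `isspl0` of Voevodsky's "On 2-torsion in motivic cohomology": for a field `k`
of characteristic `≠ 2`, `n ≥ 2` (here `n = m+2`) and units `a₁,…,aₙ` of `k`, the polynomial
`f = ⟨⟨a₁,…,a_{n-1}⟩⟩(X₀,…,X_{2^{n-1}-1}) − aₙ·X²_{2^{n-1}}` (the affine equation of the norm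
quadric `Q_{a₁,…,aₙ}`, in variables indexed by `(Fin (n-1) → Bool) ⊕ Unit`) generates a prime
ideal, and in the Milnor K-group `K_n^M(L)` of the fraction field `L` of the integral domain
`A = k[X…]/(f)` the symbol `{a₁,…,aₙ}` is divisible by `2`. -/
theorem milnorSymbol_div_two_over_function_field_of_norm_quadric
    {k : Type u} [Field k] (hchar : ringChar k ≠ 2)
    (m : ℕ) (a : Fin (m + 2) → kˣ) :
    let f : MvPolynomial ((Fin (m + 1) → Bool) ⊕ Unit) k :=
      (∑ S : Fin (m + 1) → Bool,
          C (pfisterCoeff (m + 1) (fun i => (a i.castSucc : k)) S) * X (Sum.inl S) ^ 2) -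
        C (a (Fin.last (m + 1)) : k) * X (Sum.inr ()) ^ 2
    (Ideal.span {f}).IsPrime ∧
      ∀ (L : Type u) [Field L]
        [Algebra (MvPolynomial ((Fin (m + 1) → Bool) ⊕ Unit) k ⧸ Ideal.span {f}) L]
        [IsFractionRing (MvPolynomial ((Fin (m + 1) → Bool) ⊕ Unit) k ⧸ Ideal.span {f}) L],
        ∃ y : MilnorKGroup L (m + 2),
          milnorSymbol (fun i =>
            Units.map ((algebraMap (MvPolynomial ((Fin (m + 1) → Bool) ⊕ Unit) k ⧸
                Ideal.span {f}) L).comp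
              ((Ideal.Quotient.mk (Ideal.span {f})).comp MvPolynomial.C)).toMonoidHom
              (a i)) = 2 • y := by
  intro f
  have hf : Prime f := prime_diagonalQuadric (Ring.two_ne_zero hchar) (a _).ne_zero
    (s₀ := fun _ => false) (s₁ := fun _ => true) (fun h => by simpa using congrFun h 0)
    (pfisterCoeff_ne_zero (fun _ => (a _).ne_zero) _)
    (pfisterCoeff_ne_zero (fun _ => (a _).ne_zero) _)
  have hI := (Ideal.span_singleton_prime hf.ne_zero).2 hf
  refine ⟨hI, fun L _ _ _ => ?_⟩
  set θ := (algebraMap _ L).comp (Ideal.Quotient.mk (Ideal.span {f}))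
  have hθf : θ f = 0 := by
    simp [θ, Ideal.Quotient.eq_zero_iff_mem.2 (Ideal.mem_span_singleton_self f)]
  have hθY : θ (X (Sum.inr ())) ≠ 0 :=
    (map_ne_zero_iff _ (IsFractionRing.injective _ L)).2 <| Ideal.Quotient.eq_zero_iff_mem.not.2 <|
      Ideal.mem_span_singleton.not.2 <| diagonalQuadric_not_dvd_X_inr _ (a _).ne_zero
  have hrep := map_C_eq_sum_of_map_diagonalQuadric_eq_zero θ hθf hθY
  set u : Fin (m + 2) → Lˣ := fun i => Units.map (θ.comp C).toMonoidHom (a i)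
  have hu : (u (Fin.last _) : L) = pfisterForm (m + 1) (fun i => (Fin.init u i : L))
      fun S => θ (X (Sum.inl S)) / θ (X (Sum.inr ())) := by
    show (θ.comp C) _ = ∑ S, pfisterCoeff (m + 1) (fun i => (θ.comp C) (a i.castSucc : k)) S * _
    simp only [map_pfisterCoeff]
    exact hrep
  obtain ⟨y, hy⟩ := (even_iff_exists_two_nsmul _).1
    (even_milnorSymbol_snoc_of_eq_pfisterForm _ _ _ hu)
  exact ⟨y, by rwa [Fin.snoc_init_self] at hy⟩
end
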